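/- Let n ≥ 0 be an integer. For every real s > n + 1, one has ∑_p ∑_{m=0}^{n} [ -log(1 - p^{m-s}) ] + s · ∑_p log(p) · ∑_{k≥1} (∑_{j=0}^{n} p^{jk}) p^{-sk} = ∑_{m=0}^{n} [ log ζ(s-m) - s · ζ′(s-m)/ζ(s-m) ], where ζ is the Riemann zeta function; all the series involved converge. In other words, the global Hasse–Weil entropy of projective n-space equals (1 - s·d/ds) log ∏_{m=0}^{n} ζ(s-m). -/

import Mathlib

/-- The Riemann zeta function at real arguments, `ζ(s) = ∑_{n≥1} n^{-s}` for `s > 1`. -/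
noncomputable def zetaR (s : ℝ) : ℝ := ∑' n : ℕ, ((n : ℝ) + 1) ^ (-s)

/-!
Fix `m ≤ n` and put `u = s - m > 1`. Taking logarithms in the Euler product
`ζ(u) = ∏_p (1 - p^{-u})⁻¹` gives `∑_p -log (1 - p^{-u}) = log ζ(u)`, and regrouping
`-ζ'(u)/ζ(u) = ∑_n Λ(n) n^{-u}` over prime powers gives
`∑_p log p · p^{-u} / (1 - p^{-u})`.
Since `(∑_{j ≤ n} p^{jk}) p^{-sk} = ∑_{j ≤ n} (p^{j-s})^k`, summing the geometric series
in `k` splits both Hasse–Weil series into these `n + 1` Euler-product identities.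
`zetaR` agrees with `riemannZeta` on `(1, ∞)`, so its derivative there is the real part of `ζ'`.
-/

open Real
open scoped LSeries.notation ArithmeticFunction.vonMangoldt

lemma hasSum_pow_succ_of_lt_one {x : ℝ} (h₀ : 0 ≤ x) (h₁ : x < 1) :
    HasSum (fun k : ℕ => x ^ (k + 1)) (x / (1 - x)) := by
  simpa only [pow_succ', div_eq_mul_inv] using (hasSum_geometric_of_lt_one h₀ h₁).mul_left x

lemma HasSum.primes_fiberwise {α : Type*} [AddCommMonoid α] [TopologicalSpace α]
    [ContinuousAdd α] [RegularSpace α] {f : ℕ → α} {a : α} {g : Nat.Primes → α}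
    (hf : HasSum f a) (hsupp : Function.support f ⊆ {n | IsPrimePow n})
    (hg : ∀ p : Nat.Primes, HasSum (fun k => f ((p : ℕ) ^ (k + 1))) (g p)) : HasSum g a := by
  have hpp : HasSum (fun n : {n : ℕ // IsPrimePow n} => f n) a :=
    (hasSum_subtype_iff_of_support_subset hsupp).mpr hf
  refine (Nat.Primes.prodNatEquiv.hasSum_iff.mpr hpp).prod_fiberwise fun p => ?_
  simpa only [Function.comp_apply, Nat.Primes.coe_prodNatEquiv_apply] using hg p

lemma summable_primes_rpow_neg {u : ℝ} (hu : 1 < u) :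
    Summable (fun p : Nat.Primes => ((p : ℕ) : ℝ) ^ (-u)) :=
  (summable_nat_rpow.mpr (by linarith)).comp_injective Subtype.val_injective

lemma riemannZeta_ofReal_eq_zetaR {u : ℝ} (hu : 1 < u) : riemannZeta u = zetaR u := by
  rw [zeta_eq_tsum_one_div_nat_add_one_cpow (by simpa using hu), zetaR, Complex.ofReal_tsum]
  refine tsum_congr fun n => ?_
  rw [Complex.ofReal_cpow (by positivity), one_div, ← Complex.cpow_neg]
  push_cast
  rfl

lemma hasSum_primes_neg_log_one_sub_rpow {u : ℝ} (hu : 1 < u) :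
    HasSum (fun p : Nat.Primes => -log (1 - ((p : ℕ) : ℝ) ^ (-u))) (log (zetaR u)) := by
  have hsum : Summable (fun p : Nat.Primes => -log (1 - ((p : ℕ) : ℝ) ^ (-u))) := by
    simpa only [sub_eq_add_neg] using
      (summable_log_one_add_of_summable (summable_primes_rpow_neg hu).neg).neg
  have hexp : exp (∑' p : Nat.Primes, -log (1 - ((p : ℕ) : ℝ) ^ (-u))) = zetaR u := by
    apply Complex.ofReal_injective
    rw [Complex.ofReal_exp, Complex.ofReal_tsum, ← riemannZeta_ofReal_eq_zetaR hu,
      ← riemannZeta_eulerProduct_exp_log (by simpa using hu)]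
    congr 1
    refine tsum_congr fun p => ?_
    have hlt : ((p : ℕ) : ℝ) ^ (-u) < 1 :=
      rpow_lt_one_of_one_lt_of_neg (by exact_mod_cast p.prop.one_lt) (by linarith)
    rw [Complex.ofReal_neg, Complex.ofReal_log (by linarith), Complex.ofReal_sub,
      Complex.ofReal_cpow (by positivity)]
    push_cast
    rfl
  simpa only [← hexp, log_exp] using hsum.hasSum

lemma deriv_zetaR {u : ℝ} (hu : 1 < u) : deriv zetaR u = (deriv riemannZeta u).re := by
  have hne : (u : ℂ) ≠ 1 := by exact_mod_cast hu.ne'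
  refine HasDerivAt.deriv ?_
  refine (differentiableAt_riemannZeta hne).hasDerivAt.real_of_complex.congr_of_eventuallyEq ?_
  filter_upwards [eventually_gt_nhds hu] with x hx
  rw [riemannZeta_ofReal_eq_zetaR hx, Complex.ofReal_re]

-- `LSeries.term f u 0 = 0`, whereas `0 ^ 0 = 1`.
lemma LSeries.term_ofReal (f : ℕ → ℝ) {u : ℝ} (hu : u ≠ 0) (n : ℕ) :
    LSeries.term (fun n => (f n : ℂ)) u n = ((f n * (n : ℝ) ^ (-u) : ℝ) : ℂ) := by
  rcases eq_or_ne n 0 with rfl | hn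
  · simp [LSeries.term_zero, zero_rpow (neg_ne_zero.mpr hu)]
  · rw [LSeries.term_of_ne_zero hn, Complex.ofReal_mul, Complex.ofReal_cpow (Nat.cast_nonneg n),
      div_eq_mul_inv, ← Complex.cpow_neg]
    push_cast
    rfl

lemma hasSum_vonMangoldt_mul_rpow {u : ℝ} (hu : 1 < u) :
    HasSum (fun n : ℕ => Λ n * (n : ℝ) ^ (-u)) (-deriv zetaR u / zetaR u) := by
  have hu' : 1 < (u : ℂ).re := by simpa using hu
  have h := (ArithmeticFunction.LSeriesSummable_vonMangoldt hu').LSeriesHasSum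
  rw [ArithmeticFunction.LSeries_vonMangoldt_eq_deriv_riemannZeta_div hu',
    riemannZeta_ofReal_eq_zetaR hu] at h
  convert Complex.hasSum_re h using 1
  · simp only [LSeries.term_ofReal _ (zero_lt_one.trans hu).ne', Complex.ofReal_re]
  · rw [Complex.div_ofReal_re, Complex.neg_re, deriv_zetaR hu]

lemma hasSum_vonMangoldt_primePow_mul_rpow (p : Nat.Primes) {u : ℝ} (hu : 0 < u) :
    HasSum (fun k : ℕ => Λ ((p : ℕ) ^ (k + 1)) * (((p : ℕ) ^ (k + 1) : ℕ) : ℝ) ^ (-u))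
      (log (p : ℕ) * (((p : ℕ) : ℝ) ^ (-u) / (1 - ((p : ℕ) : ℝ) ^ (-u)))) := by
  have hp : (1 : ℝ) < (p : ℕ) := by exact_mod_cast p.prop.one_lt
  refine ((hasSum_pow_succ_of_lt_one (by positivity)
    (rpow_lt_one_of_one_lt_of_neg hp (neg_lt_zero.mpr hu))).mul_left _).congr_fun fun k => ?_
  rw [ArithmeticFunction.vonMangoldt_apply_pow k.succ_ne_zero,
    ArithmeticFunction.vonMangoldt_apply_prime p.prop, Nat.cast_pow, rpow_pow_comm (by positivity)]

lemma hasSum_primes_log_mul_rpow_div {u : ℝ} (hu : 1 < u) :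
    HasSum (fun p : Nat.Primes =>
        log (p : ℕ) * (((p : ℕ) : ℝ) ^ (-u) / (1 - ((p : ℕ) : ℝ) ^ (-u))))
      (-deriv zetaR u / zetaR u) :=
  (hasSum_vonMangoldt_mul_rpow hu).primes_fiberwise
    (fun _ hn => ArithmeticFunction.vonMangoldt_ne_zero_iff.mp (left_ne_zero_of_mul hn))
    fun p => hasSum_vonMangoldt_primePow_mul_rpow p (by linarith)

lemma hasSum_sum_pow_mul_rpow {x s : ℝ} (hx : 1 < x) {n : ℕ} (hs : (n : ℝ) < s) :
    HasSum (fun k : ℕ =>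
        (∑ j ∈ Finset.range (n + 1), x ^ (j * (k + 1))) * x ^ (-s * ((k : ℝ) + 1)))
      (∑ j ∈ Finset.range (n + 1), x ^ ((j : ℝ) - s) / (1 - x ^ ((j : ℝ) - s))) := by
  have hx₀ : 0 ≤ x := by linarith
  refine (hasSum_sum fun j hj => hasSum_pow_succ_of_lt_one (rpow_nonneg hx₀ _)
      (rpow_lt_one_of_one_lt_of_neg hx ?_)).congr_fun fun k => ?_
  · have : (j : ℝ) ≤ n := by exact_mod_cast Finset.mem_range_succ_iff.mp hj
    linarith
  · rw [Finset.sum_mul]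
    refine Finset.sum_congr rfl fun j _ => ?_
    rw [← rpow_natCast, ← rpow_natCast, ← rpow_mul hx₀, ← rpow_add (by linarith)]
    congr 1
    push_cast
    ring

/-- the global Hasse–Weil entropy of projective `n`-space equals
`(1 - s·d/ds) log ∏_{m=0}^{n} ζ(s-m)`. -/
theorem stmt_4 (n : ℕ) (s : ℝ) (hs : (n : ℝ) + 1 < s) :
    (∀ p : Nat.Primes, Summable (fun k : ℕ =>
      (∑ j ∈ Finset.range (n + 1), ((p : ℕ) : ℝ) ^ (j * (k + 1)))
        * ((p : ℕ) : ℝ) ^ (-s * ((k : ℝ) + 1)))) ∧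
    Summable (fun p : Nat.Primes =>
      ∑ m ∈ Finset.range (n + 1), -Real.log (1 - ((p : ℕ) : ℝ) ^ ((m : ℝ) - s))) ∧
    Summable (fun p : Nat.Primes =>
      Real.log ((p : ℕ) : ℝ) * ∑' k : ℕ,
        (∑ j ∈ Finset.range (n + 1), ((p : ℕ) : ℝ) ^ (j * (k + 1)))
          * ((p : ℕ) : ℝ) ^ (-s * ((k : ℝ) + 1))) ∧
    (∑' p : Nat.Primes,
        ∑ m ∈ Finset.range (n + 1), -Real.log (1 - ((p : ℕ) : ℝ) ^ ((m : ℝ) - s)))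
      + s * ∑' p : Nat.Primes,
          Real.log ((p : ℕ) : ℝ) * ∑' k : ℕ,
            (∑ j ∈ Finset.range (n + 1), ((p : ℕ) : ℝ) ^ (j * (k + 1)))
              * ((p : ℕ) : ℝ) ^ (-s * ((k : ℝ) + 1))
      = ∑ m ∈ Finset.range (n + 1),
          (Real.log (zetaR (s - m)) - s * deriv zetaR (s - m) / zetaR (s - m)) := by
  have hs_sub : ∀ m ∈ Finset.range (n + 1), 1 < s - m := fun m hm => by
    have : (m : ℝ) ≤ n := by exact_mod_cast Finset.mem_range_succ_iff.mp hm
    linarith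
  have hinner (p : Nat.Primes) := hasSum_sum_pow_mul_rpow (x := (p : ℕ))
    (by exact_mod_cast p.prop.one_lt) (show (n : ℝ) < s by linarith)
  have hlog : HasSum
      (fun p : Nat.Primes =>
        ∑ m ∈ Finset.range (n + 1), -log (1 - ((p : ℕ) : ℝ) ^ ((m : ℝ) - s)))
      (∑ m ∈ Finset.range (n + 1), log (zetaR (s - m))) := by
    simpa only [neg_sub] using
      hasSum_sum fun m hm => hasSum_primes_neg_log_one_sub_rpow (hs_sub m hm)
  have hlogDeriv : HasSum
      (fun p : Nat.Primes => log ((p : ℕ) : ℝ) * ∑' k : ℕ,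
        (∑ j ∈ Finset.range (n + 1), ((p : ℕ) : ℝ) ^ (j * (k + 1)))
          * ((p : ℕ) : ℝ) ^ (-s * ((k : ℝ) + 1)))
      (∑ m ∈ Finset.range (n + 1), -deriv zetaR (s - m) / zetaR (s - m)) := by
    simpa only [(hinner _).tsum_eq, Finset.mul_sum, neg_sub] using
      hasSum_sum fun m hm => hasSum_primes_log_mul_rpow_div (hs_sub m hm)
  refine ⟨fun p => (hinner p).summable, hlog.summable, hlogDeriv.summable, ?_⟩
  rw [hlog.tsum_eq, hlogDeriv.tsum_eq, Finset.mul_sum, ← Finset.sum_add_distrib]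
  refine Finset.sum_congr rfl fun m _ => ?_
  ring
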